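/- arXiv:1801.04172 — 3 statements merged into one kernel-verified Lean document; each statement's English description precedes it below -/
import Mathlib

section
/- Let A, J be real n x n matrices (J possibly rectangular n x m), let M_hat be an n x n symmetric positive definite matrix, let W be an m x m symmetric positive definite matrix, and let beta, tau > 0. Define S = A M_hat^{-1} A^T + (1/(beta*tau)) J W^{-1} J^T and S_hat = (A + M1) M_hat^{-1} (A^T + M1^T), where M1 = (1/sqrt(beta*tau)) (J W^{-1} J^T)^{1/2} M_hat^{1/2}. Then for every vector v with S_hat v != 0, the Rayleigh quotient (v^T S v)/(v^T S_hat v) is at least 1/2. -/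
open Matrix

/-- The old Mathlib `Matrix.PosSemidef.sqrt` (removed since), restored with its original definition. -/
noncomputable def Matrix.PosSemidef.sqrt {n : Type*} [Fintype n] [DecidableEq n]
    {A : Matrix n n ℝ} (hA : A.PosSemidef) : Matrix n n ℝ :=
  hA.1.eigenvectorUnitary.1 * diagonal ((↑) ∘ (hA.1.eigenvalues · |>.sqrt)) *
    (star hA.1.eigenvectorUnitary : Matrix n n ℝ)

/-!
With `N = M̂⁻¹`, `a = Aᵀ v` and `b = M1ᵀ v`, both quadratic forms are `N`-quadratic forms:
`vᵀ Ŝ v = (a + b)ᵀ N (a + b)` and, because `M1 N M1ᵀ = (βτ)⁻¹ J W⁻¹ Jᵀ` (the square roots of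
`M̂` cancel against `M̂⁻¹`), `vᵀ S v = aᵀ N a + bᵀ N b`. The bound is then the parallelogram
inequality `q(a + b) ≤ 2 (q a + q b)` for the positive semidefinite form `q`, and `Ŝ v ≠ 0`
makes the denominator positive since `Ŝ` is positive semidefinite.
-/

open scoped MatrixOrder

namespace Matrix

theorem dotProduct_mul_mul_transpose_mulVec {m n R : Type*} [Fintype m] [Fintype n]
    [CommSemiring R] (B : Matrix m n R) (N : Matrix n n R) (v : m → R) :
    v ⬝ᵥ (B * N * Bᵀ) *ᵥ v = (Bᵀ *ᵥ v) ⬝ᵥ N *ᵥ (Bᵀ *ᵥ v) := by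
  rw [← mulVec_mulVec, ← mulVec_mulVec, dotProduct_mulVec, mulVec_transpose]

theorem PosSemidef.dotProduct_mulVec_add_le {n : Type*} [Fintype n] {N : Matrix n n ℝ}
    (hN : N.PosSemidef) (a b : n → ℝ) :
    (a + b) ⬝ᵥ N *ᵥ (a + b) ≤ 2 * (a ⬝ᵥ N *ᵥ a + b ⬝ᵥ N *ᵥ b) := by
  have hsymm : b ⬝ᵥ N *ᵥ a = a ⬝ᵥ N *ᵥ b := by
    rw [dotProduct_mulVec, ← mulVec_transpose, ← conjTranspose_eq_transpose_of_trivial,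
      hN.isHermitian.eq, dotProduct_comm]
  have hdiff := hN.dotProduct_mulVec_nonneg (a - b)
  simp only [star_trivial, mulVec_add, mulVec_sub, dotProduct_add, dotProduct_sub, add_dotProduct,
    sub_dotProduct] at hdiff ⊢
  linarith

variable {n : Type*} [Fintype n] [DecidableEq n]

theorem PosSemidef.sqrt_eq_cfcSqrt {A : Matrix n n ℝ} (hA : A.PosSemidef) :
    hA.sqrt = CFC.sqrt A := by
  rw [CFC.sqrt_eq_cfc, cfc_nnreal_eq_real _ A, hA.1.cfc_eq]
  simp only [IsHermitian.cfc, PosSemidef.sqrt, Unitary.conjStarAlgAut_apply, Function.comp_def,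
    Real.coe_sqrt, Real.coe_toNNReal', RCLike.ofReal_real_eq_id, id,
    max_eq_left (hA.eigenvalues_nonneg _)]

theorem PosSemidef.transpose_sqrt {A : Matrix n n ℝ} (hA : A.PosSemidef) :
    hA.sqrtᵀ = hA.sqrt := by
  rw [hA.sqrt_eq_cfcSqrt, ← conjTranspose_eq_transpose_of_trivial]
  exact (CFC.sqrt_nonneg A).posSemidef.isHermitian

theorem PosSemidef.sqrt_mul_sqrt {A : Matrix n n ℝ} (hA : A.PosSemidef) :
    hA.sqrt * hA.sqrt = A := by
  rw [hA.sqrt_eq_cfcSqrt, CFC.sqrt_mul_sqrt_self A hA.nonneg]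

theorem PosDef.sqrt_mul_inv_mul_sqrt {A : Matrix n n ℝ} (hA : A.PosDef) :
    hA.posSemidef.sqrt * A⁻¹ * hA.posSemidef.sqrt = 1 := by
  set Q := hA.posSemidef.sqrt
  have hQQ : Q * Q = A := hA.posSemidef.sqrt_mul_sqrt
  have hQ : IsUnit Q.det := by
    have : IsUnit (Q.det * Q.det) := by rw [← det_mul, hQQ]; exact hA.isUnit.map detMonoidHom
    exact isUnit_of_mul_isUnit_left this
  rw [← hQQ, Matrix.mul_inv_rev, ← Matrix.mul_assoc Q, mul_nonsing_inv _ hQ,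
    Matrix.one_mul, nonsing_inv_mul _ hQ]

theorem PosSemidef.sqrt_mul_sqrt_mul_inv_mul_transpose {P M : Matrix n n ℝ} (hP : P.PosSemidef)
    (hM : M.PosDef) :
    hP.sqrt * hM.posSemidef.sqrt * M⁻¹ * (hP.sqrt * hM.posSemidef.sqrt)ᵀ = P := by
  rw [transpose_mul, hP.transpose_sqrt, hM.posSemidef.transpose_sqrt, Matrix.mul_assoc _ _ M⁻¹,
    Matrix.mul_assoc, ← Matrix.mul_assoc _ hM.posSemidef.sqrt, hM.sqrt_mul_inv_mul_sqrt,
    Matrix.one_mul, hP.sqrt_mul_sqrt]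

end Matrix

theorem stmt_2_general (n m : ℕ) (A : Matrix (Fin n) (Fin n) ℝ) (J : Matrix (Fin n) (Fin m) ℝ)
    (Mhat : Matrix (Fin n) (Fin n) ℝ) (W : Matrix (Fin m) (Fin m) ℝ)
    (hMhat : Mhat.PosDef) (β τ : ℝ) (hβ : 0 < β) (hτ : 0 < τ)
    (hJ : (J * W⁻¹ * Jᵀ).PosSemidef)
    (M1 : Matrix (Fin n) (Fin n) ℝ)
    (hM1 : M1 = (Real.sqrt (β * τ))⁻¹ • (hJ.sqrt * hMhat.posSemidef.sqrt))
    (S Shat : Matrix (Fin n) (Fin n) ℝ)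
    (hS : S = A * Mhat⁻¹ * Aᵀ + (1 / (β * τ)) • (J * W⁻¹ * Jᵀ))
    (hShat : Shat = (A + M1) * Mhat⁻¹ * (Aᵀ + M1ᵀ))
    (v : Fin n → ℝ) (hv : Shat.mulVec v ≠ 0) :
    (v ⬝ᵥ S.mulVec v) / (v ⬝ᵥ Shat.mulVec v) ≥ 1 / 2 := by
  have hN : (Mhat⁻¹).PosSemidef := hMhat.inv.posSemidef
  have hM1N : M1 * Mhat⁻¹ * M1ᵀ = (1 / (β * τ)) • (J * W⁻¹ * Jᵀ) := by
    rw [hM1, transpose_smul, Matrix.smul_mul, Matrix.mul_smul, Matrix.smul_mul, smul_smul,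
      hJ.sqrt_mul_sqrt_mul_inv_mul_transpose hMhat, ← mul_inv, Real.mul_self_sqrt (by positivity),
      one_div]
  have hShatPSD : Shat.PosSemidef := by
    simpa only [hShat, conjTranspose_eq_transpose_of_trivial, transpose_add] using
      hN.mul_mul_conjTranspose_same (A + M1)
  have hpos : 0 < v ⬝ᵥ Shat *ᵥ v := by
    refine lt_of_le_of_ne (hShatPSD.dotProduct_mulVec_nonneg v) fun h => hv ?_
    exact (hShatPSD.dotProduct_mulVec_zero_iff v).mp h.symm
  rw [ge_iff_le, le_div_iff₀ hpos, hS, hShat, ← hM1N, ← transpose_add, add_mulVec, dotProduct_add,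
    dotProduct_mul_mul_transpose_mulVec, dotProduct_mul_mul_transpose_mulVec,
    dotProduct_mul_mul_transpose_mulVec, transpose_add, add_mulVec]
  linarith [hN.dotProduct_mulVec_add_le (Aᵀ *ᵥ v) (M1ᵀ *ᵥ v)]

theorem stmt_2 (n m : ℕ) (A : Matrix (Fin n) (Fin n) ℝ) (J : Matrix (Fin n) (Fin m) ℝ)
    (Mhat : Matrix (Fin n) (Fin n) ℝ) (W : Matrix (Fin m) (Fin m) ℝ)
    (hMhat : Mhat.PosDef) (hW : W.PosDef) (β τ : ℝ) (hβ : 0 < β) (hτ : 0 < τ)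
    (hJ : (J * W⁻¹ * Jᵀ).PosSemidef)
    (M1 : Matrix (Fin n) (Fin n) ℝ)
    (hM1 : M1 = (Real.sqrt (β * τ))⁻¹ • (hJ.sqrt * hMhat.posSemidef.sqrt))
    (S Shat : Matrix (Fin n) (Fin n) ℝ)
    (hS : S = A * Mhat⁻¹ * Aᵀ + (1 / (β * τ)) • (J * W⁻¹ * Jᵀ))
    (hShat : Shat = (A + M1) * Mhat⁻¹ * (Aᵀ + M1ᵀ))
    (v : Fin n → ℝ) (hv : Shat.mulVec v ≠ 0) :
    (v ⬝ᵥ S.mulVec v) / (v ⬝ᵥ Shat.mulVec v) ≥ 1 / 2 :=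
  stmt_2_general n m A J Mhat W hMhat β τ hβ hτ hJ M1 hM1 S Shat hS hShat v hv
end

section
/- Let A be an invertible n x n real matrix, B, C be m x n real matrices with S = C A^{-1} B^T invertible, and let K = [[A, B^T],[C, 0]] and P_T = [[A, 0],[B, -S]] with B = C. Then the preconditioned matrix K P_T^{-1} (equivalently P_T^{-1} K) satisfies (T - I)^2 = 0 where T = P_T^{-1} K; hence its minimal polynomial divides (x-1)^2. -/
open Matrix

theorem stmt_4 (n m : ℕ) (A : Matrix (Fin n) (Fin n) ℝ)
    (B : Matrix (Fin m) (Fin n) ℝ) (hA : IsUnit A)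
    (S : Matrix (Fin m) (Fin m) ℝ) (hS : S = B * A⁻¹ * Bᵀ) (hSu : IsUnit S)
    (K P T : Matrix (Fin n ⊕ Fin m) (Fin n ⊕ Fin m) ℝ)
    (hK : K = Matrix.fromBlocks A Bᵀ B 0)
    (hP : P = Matrix.fromBlocks A 0 B (-S))
    (hT : T = P⁻¹ * K) :
    (T - 1) ^ 2 = 0 := by
  have hAd : IsUnit A.det := (Matrix.isUnit_iff_isUnit_det A).mp hA
  have hSd : IsUnit S.det := (Matrix.isUnit_iff_isUnit_det S).mp hSu
  have hA1 : A * A⁻¹ = 1 := mul_nonsing_inv A hAd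
  have hA1' : A⁻¹ * A = 1 := nonsing_inv_mul A hAd
  have hS1 : S * S⁻¹ = 1 := mul_nonsing_inv S hSd
  have hS1' : S⁻¹ * S = 1 := nonsing_inv_mul S hSd
  set N : Matrix (Fin n ⊕ Fin m) (Fin n ⊕ Fin m) ℝ :=
    Matrix.fromBlocks A⁻¹ 0 (S⁻¹ * B * A⁻¹) (-S⁻¹) with hN
  have hPN : P * N = 1 := by
    rw [hP, hN, Matrix.fromBlocks_multiply]
    have h1 : B * A⁻¹ + -S * (S⁻¹ * B * A⁻¹) = 0 := by
      rw [Matrix.neg_mul, ← Matrix.mul_assoc S, ← Matrix.mul_assoc S, hS1, Matrix.one_mul]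
      simp
    have h2 : -S * -S⁻¹ = 1 := by rw [neg_mul_neg, hS1]
    rw [hA1, h1, h2]
    simp [← Matrix.fromBlocks_one]
  have hPinv : P⁻¹ = N := inv_eq_right_inv hPN
  have hT' : T = Matrix.fromBlocks 1 (A⁻¹ * Bᵀ) 0 1 := by
    rw [hT, hPinv, hN, hK, Matrix.fromBlocks_multiply]
    have h3 : S⁻¹ * B * A⁻¹ * A + -S⁻¹ * B = 0 := by
      rw [Matrix.mul_assoc, Matrix.mul_assoc, hA1', Matrix.mul_one]
      simp [Matrix.mul_assoc]
    have h4 : S⁻¹ * B * A⁻¹ * Bᵀ + -S⁻¹ * 0 = 1 := by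
      rw [Matrix.mul_zero, add_zero, Matrix.mul_assoc S⁻¹, Matrix.mul_assoc S⁻¹,
        ← hS, hS1']
    rw [hA1', h3, h4]
    simp
  have hTm : T - 1 = Matrix.fromBlocks 0 (A⁻¹ * Bᵀ) 0 0 := by
    rw [hT', ← Matrix.fromBlocks_one, sub_eq_add_neg, Matrix.fromBlocks_neg,
      Matrix.fromBlocks_add]
    simp
  rw [hTm, sq, Matrix.fromBlocks_multiply]
  simp [← Matrix.fromBlocks_zero]
end

section
/- Let K = [[A, B^T],[C, -E]] be an invertible block matrix with A invertible, and let P = [[A, 0],[C, -S_E]] where S_E = E + C A^{-1} B^T is assumed invertible. Then T = P^{-1} K satisfies (T - I)^2 = 0, so a GMRES method preconditioned by P converges in at most 2 iterations in exact arithmetic. -/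
open Matrix

lemma fromBlocks_sub' {n m : ℕ} (a a' : Matrix (Fin n) (Fin n) ℝ)
    (b b' : Matrix (Fin n) (Fin m) ℝ) (c c' : Matrix (Fin m) (Fin n) ℝ)
    (d d' : Matrix (Fin m) (Fin m) ℝ) :
    Matrix.fromBlocks a b c d - Matrix.fromBlocks a' b' c' d' =
      Matrix.fromBlocks (a - a') (b - b') (c - c') (d - d') := by
  ext (i | i) (j | j) <;> simp [Matrix.fromBlocks]

theorem stmt_16 (n m : ℕ) (A : Matrix (Fin n) (Fin n) ℝ) (hA : IsUnit A)
    (B C : Matrix (Fin m) (Fin n) ℝ) (E : Matrix (Fin m) (Fin m) ℝ)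
    (SE : Matrix (Fin m) (Fin m) ℝ) (hSE : SE = E + C * A⁻¹ * Bᵀ) (hSEu : IsUnit SE)
    (K P T : Matrix (Fin n ⊕ Fin m) (Fin n ⊕ Fin m) ℝ)
    (hK : K = Matrix.fromBlocks A Bᵀ C (-E)) (hKu : IsUnit K)
    (hP : P = Matrix.fromBlocks A 0 C (-SE))
    (hT : T = P⁻¹ * K) :
    (T - 1) ^ 2 = 0 := by
  have hAdet : IsUnit A.det := (Matrix.isUnit_iff_isUnit_det A).mp hA
  have hSEdet : IsUnit SE.det := (Matrix.isUnit_iff_isUnit_det SE).mp hSEu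
  have hAAi : A * A⁻¹ = 1 := Matrix.mul_nonsing_inv A hAdet
  have hAiA : A⁻¹ * A = 1 := Matrix.nonsing_inv_mul A hAdet
  have hSSi : SE * SE⁻¹ = 1 := Matrix.mul_nonsing_inv SE hSEdet
  have hSiS : SE⁻¹ * SE = 1 := Matrix.nonsing_inv_mul SE hSEdet
  have hPinv : P⁻¹ = Matrix.fromBlocks A⁻¹ 0 (SE⁻¹ * C * A⁻¹) (-SE⁻¹) := by
    apply Matrix.inv_eq_right_inv
    rw [hP, Matrix.fromBlocks_multiply]
    have hc : C * A⁻¹ + -(SE * (SE⁻¹ * C * A⁻¹)) = (0 : Matrix (Fin m) (Fin n) ℝ) := by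
      rw [← Matrix.mul_assoc, ← Matrix.mul_assoc, hSSi]
      simp
    simp [hAAi, hSSi, hc, Matrix.fromBlocks_one]
  have hd : SE⁻¹ * C * A⁻¹ * Bᵀ + SE⁻¹ * E = (1 : Matrix (Fin m) (Fin m) ℝ) := by
    rw [← hSiS, hSE, Matrix.mul_add, add_comm]
    simp [Matrix.mul_assoc]
  have hc : SE⁻¹ * C * A⁻¹ * A + -(SE⁻¹ * C) = (0 : Matrix (Fin m) (Fin n) ℝ) := by
    rw [Matrix.mul_assoc, hAiA]
    simp
  have hT2 : T = Matrix.fromBlocks 1 (A⁻¹ * Bᵀ) 0 1 := by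
    rw [hT, hPinv, hK, Matrix.fromBlocks_multiply]
    simp [hAiA, hc, hd]
  have hT1 : T - 1 = Matrix.fromBlocks 0 (A⁻¹ * Bᵀ) 0 0 := by
    rw [hT2, ← Matrix.fromBlocks_one, fromBlocks_sub']
    simp
  rw [sq, hT1, Matrix.fromBlocks_multiply]
  simp
end
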